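/- arXiv:1903.12243 — 7 statements merged into one kernel-verified Lean document; each statement's English description precedes it below -/
import Mathlib

section
/- Let V ⊆ F_q^D be a linear code with relative minimum distance λ, and let ε, δ > 0 with ε < 1/3 and δ < 1 - (1-λ+ε)^{1/3}. Suppose u, u* ∈ F_q^D satisfy Pr_{x ∈ F_q}[Δ(u* + x·u, V) < δ] ≥ 2/(ε²·q). Then there exist codewords v, v* ∈ V and a subset C ⊆ D with |C| ≥ (1-δ-ε)|D| such that u agrees with v on C and u* agrees with v* on C. -/
/-!
The points `x` at which `ustar + x • u` is `δ`-close to some codeword `w x` form a set `S` of at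
least `2/ε²` elements. Let `A x` be the agreement set of `ustar + x • u` with `w x`. Jensen's
inequality for the cube of the number of sets `A x` covering a coordinate bounds the sum of all
`|A x₁ ∩ A x₂ ∩ A x₃|` from below by `(1-δ)³|S|³|D|`, so two distinct points `x₁, x₂` satisfy
`∑ₓ |A x₁ ∩ A x₂ ∩ A x| ≥ (1-δ)³|S||D| - |D|`. The codewords at `x₁, x₂` lie on a line
`vstar + x • v` of codewords, and on `A x₁ ∩ A x₂` we have `u = v` and `ustar = vstar`. A point
whose codeword is off the line therefore contributes at most `(1-λ)|D|` to the sum, by the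
minimum distance, so at least `ε|S| - 1 ≥ 1/ε` codewords `w x` lie on the line. For distinct such
`x` the parts of `A x` outside `{u = v} ∩ {ustar = vstar}` are disjoint, so one of them has at
most `ε|D|` elements.
-/

open Finset
open scoped Classical

/-- Relative Hamming distance between two functions on a finite domain. -/
noncomputable def relDist {D F : Type*} [Fintype D] (u v : D → F) : ℝ :=
  ((Finset.univ.filter (fun i => u i ≠ v i)).card : ℝ) / (Fintype.card D)

noncomputable def agreeSet {D F : Type*} [Fintype D] (u v : D → F) : Finset D := {i | u i = v i}

section agreeSet

variable {D F : Type*} [Fintype D]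

@[simp]
lemma mem_agreeSet {u v : D → F} {y : D} : y ∈ agreeSet u v ↔ u y = v y := by
  simp [agreeSet]

lemma card_agreeSet (u v : D → F) :
    (#(agreeSet u v) : ℝ) = (1 - relDist u v) * Fintype.card D := by
  have hsplit := card_filter_add_card_filter_not (s := univ) (fun i => u i = v i)
  rw [card_univ] at hsplit
  rcases (Fintype.card D).eq_zero_or_pos with h0 | hpos
  · rw [h0] at hsplit ⊢
    simp_all [agreeSet]
  · rw [relDist, sub_mul, one_mul, div_mul_cancel₀ _ (by positivity), agreeSet, eq_sub_iff_add_eq]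
    exact_mod_cast hsplit

lemma relDist_le_one (u v : D → F) : relDist u v ≤ 1 :=
  div_le_one_of_le₀ (mod_cast card_le_univ _) (Nat.cast_nonneg _)

lemma agreeSet_inter_agreeSet_subset (f g h : D → F) :
    agreeSet f g ∩ agreeSet f h ⊆ agreeSet g h := by
  intro y hy
  simp only [mem_inter, mem_agreeSet] at hy ⊢
  exact hy.1.symm.trans hy.2

variable [CommRing F]

lemma agreeSet_inter_agreeSet_subset_add_smul (a b c d : D → F) (x : F) :
    agreeSet b d ∩ agreeSet a c ⊆ agreeSet (a + x • b) (c + x • d) := by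
  intro y hy
  simp only [mem_inter, mem_agreeSet] at hy
  simp [hy.1, hy.2]

lemma agreeSet_add_smul_inter_agreeSet_add_smul_subset [IsDomain F] {x x' : F} (hx : x ≠ x')
    (a b c d : D → F) :
    agreeSet (a + x • b) (c + x • d) ∩ agreeSet (a + x' • b) (c + x' • d) ⊆
      agreeSet b d ∩ agreeSet a c := by
  intro y hy
  simp only [mem_inter, mem_agreeSet, Pi.add_apply, Pi.smul_apply, smul_eq_mul] at hy ⊢
  obtain ⟨h, h'⟩ := hy
  have hbd : b y = d y := by
    have : (x - x') * (b y - d y) = 0 := by linear_combination h - h'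
    exact sub_eq_zero.1 ((mul_eq_zero.1 this).resolve_left (sub_ne_zero.2 hx))
  exact ⟨hbd, by rw [hbd] at h; linear_combination h⟩

end agreeSet

lemma Submodule.exists_add_smul_eq {K M : Type*} [Field K] [AddCommGroup M] [Module K M]
    (V : Submodule K M) {x₁ x₂ : K} (hx : x₁ ≠ x₂) {w₁ w₂ : M} (h₁ : w₁ ∈ V) (h₂ : w₂ ∈ V) :
    ∃ v ∈ V, ∃ v' ∈ V, v' + x₁ • v = w₁ ∧ v' + x₂ • v = w₂ := by
  have hv : (x₁ - x₂)⁻¹ • (w₁ - w₂) ∈ V := V.smul_mem _ (V.sub_mem h₁ h₂)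
  refine ⟨_, hv, _, V.sub_mem h₁ (V.smul_mem x₁ hv), sub_add_cancel _ _, ?_⟩
  rw [sub_add, ← sub_smul, smul_smul, mul_inv_cancel₀ (sub_ne_zero.2 hx), one_smul,
    sub_sub_cancel]

lemma pow_mul_card_le_sum_pow {ι : Type*} {s : Finset ι} {f : ι → ℝ} (hf : ∀ i ∈ s, 0 ≤ f i)
    {a : ℝ} (ha : 0 ≤ a) (h : a * #s ≤ ∑ i ∈ s, f i) (n : ℕ) :
    a ^ (n + 1) * #s ≤ ∑ i ∈ s, f i ^ (n + 1) := by
  obtain rfl | hs := s.eq_empty_or_nonempty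
  · simp
  have hs' : (0 : ℝ) < #s := mod_cast hs.card_pos
  calc a ^ (n + 1) * #s = (a * #s) ^ (n + 1) / #s ^ n := by field_simp; ring
    _ ≤ (∑ i ∈ s, f i) ^ (n + 1) / #s ^ n := by gcongr
    _ ≤ ∑ i ∈ s, f i ^ (n + 1) := pow_sum_div_card_le_sum_pow hf n

lemma sum_card_eq_sum_card_filter_mem {ι D : Type*} [Fintype D] (S : Finset ι)
    (A : ι → Finset D) : ∑ x ∈ S, #(A x) = ∑ y, #{x ∈ S | y ∈ A x} := by
  simp only [card_eq_sum_ite (subset_univ (A _)), card_filter]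
  exact sum_comm

lemma sum_card_inter_inter_eq_sum_card_filter_mem_pow {ι D : Type*} [Fintype D] (S : Finset ι)
    (A : ι → Finset D) :
    ∑ x₁ ∈ S, ∑ x₂ ∈ S, ∑ x₃ ∈ S, #(A x₁ ∩ A x₂ ∩ A x₃) = ∑ y, #{x ∈ S | y ∈ A x} ^ 3 := by
  have sum_pow_three (f : ι → ℕ) :
      (∑ x ∈ S, f x) ^ 3 = ∑ x₁ ∈ S, ∑ x₂ ∈ S, ∑ x₃ ∈ S, f x₁ * f x₂ * f x₃ := by
    rw [pow_three', sum_mul_sum, sum_mul]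
    simp only [sum_mul_sum]
  simp only [card_filter, sum_pow_three, card_eq_sum_ite (subset_univ (A _ ∩ _ ∩ _)), mem_inter,
    ite_zero_mul_ite_zero, mul_one]
  simp_rw [sum_comm (s := S) (t := (univ : Finset D))]

lemma exists_ne_le_of_sum_le {ι : Type*} {S : Finset ι} (hS : 1 < #S) {f : ι → ι → ℝ}
    (hf : ∀ x ∈ S, ∀ y ∈ S, 0 ≤ f x y) {c : ℝ}
    (h : #S ^ 2 * c + ∑ x ∈ S, f x x ≤ ∑ x ∈ S, ∑ y ∈ S, f x y) :
    ∃ x ∈ S, ∃ y ∈ S, x ≠ y ∧ c ≤ f x y := by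
  obtain ⟨x₀, hx₀, y₀, hy₀, hne⟩ := one_lt_card.1 hS
  rcases le_or_gt c 0 with hc | hc
  · exact ⟨x₀, hx₀, y₀, hy₀, hne, hc.trans (hf _ hx₀ _ hy₀)⟩
  by_contra! hlt
  have hrow : ∀ x ∈ S, ∑ y ∈ S, f x y ≤ f x x + (#S - 1) * c := by
    intro x hx
    rw [← add_sum_erase S _ hx]
    gcongr
    calc ∑ y ∈ S.erase x, f x y
        ≤ ∑ y ∈ S.erase x, c := sum_le_sum fun y hy =>
          (hlt x hx y (mem_of_mem_erase hy) (ne_of_mem_erase hy).symm).le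
      _ = (#S - 1) * c := by
          rw [sum_const, card_erase_of_mem hx, nsmul_eq_mul, Nat.cast_pred (by omega)]
  have hsum := sum_le_sum hrow
  rw [sum_add_distrib, sum_const, nsmul_eq_mul] at hsum
  have hM : (0 : ℝ) < #S := by positivity
  nlinarith

lemma exists_ne_le_sum_card_inter_inter {ι D : Type*} [Fintype D] {S : Finset ι} (hS : 1 < #S)
    {A : ι → Finset D} {θ : ℝ} (hθ : 0 ≤ θ) (hA : ∀ x ∈ S, θ * Fintype.card D ≤ #(A x)) :
    ∃ x₁ ∈ S, ∃ x₂ ∈ S, x₁ ≠ x₂ ∧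
      θ ^ 3 * #S * Fintype.card D - Fintype.card D ≤ ∑ x₃ ∈ S, (#(A x₁ ∩ A x₂ ∩ A x₃) : ℝ) := by
  refine exists_ne_le_of_sum_le hS (fun _ _ _ _ => sum_nonneg fun _ _ => Nat.cast_nonneg _) ?_
  have hdiag : ∑ x ∈ S, ∑ x₃ ∈ S, (#(A x ∩ A x ∩ A x₃) : ℝ) ≤ #S * (#S * Fintype.card D) :=
    calc ∑ x ∈ S, ∑ x₃ ∈ S, (#(A x ∩ A x ∩ A x₃) : ℝ)
        ≤ ∑ x ∈ S, ∑ x₃ ∈ S, (Fintype.card D : ℝ) := by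
          gcongr; exact_mod_cast card_le_univ _
      _ = #S * (#S * Fintype.card D) := by simp
  have hdeg : θ * #S * #(univ : Finset D) ≤ ∑ y, (#{x ∈ S | y ∈ A x} : ℝ) :=
    calc θ * #S * #(univ : Finset D) = ∑ x ∈ S, θ * Fintype.card D := by simp; ring
      _ ≤ ∑ x ∈ S, (#(A x) : ℝ) := sum_le_sum hA
      _ = ∑ y, (#{x ∈ S | y ∈ A x} : ℝ) := mod_cast sum_card_eq_sum_card_filter_mem S A
  have hcube := pow_mul_card_le_sum_pow (fun y _ => Nat.cast_nonneg _) (by positivity) hdeg 2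
  have htriple := congrArg (Nat.cast (R := ℝ))
    (sum_card_inter_inter_eq_sum_card_filter_mem_pow S A)
  push_cast at htriple
  rw [card_univ, show 2 + 1 = 3 from rfl] at hcube
  nlinarith

lemma sum_le_card_filter_mul_add_card_filter_not_mul {ι : Type*} {S : Finset ι} {p : ι → Prop}
    [DecidablePred p] {f : ι → ℝ} {a b : ℝ} (ha : ∀ x ∈ S, p x → f x ≤ a)
    (hb : ∀ x ∈ S, ¬p x → f x ≤ b) :
    ∑ x ∈ S, f x ≤ #{x ∈ S | p x} * a + (#S - #{x ∈ S | p x}) * b := by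
  calc ∑ x ∈ S, f x = ∑ x ∈ S with p x, f x + ∑ x ∈ S with ¬p x, f x :=
        (sum_filter_add_sum_filter_not S p f).symm
    _ ≤ ∑ _x ∈ S with p _x, a + ∑ _x ∈ S with ¬p _x, b := by
        gcongr with x hx x hx
        · exact ha x (mem_filter.1 hx).1 (mem_filter.1 hx).2
        · exact hb x (mem_filter.1 hx).1 (mem_filter.1 hx).2
    _ = _ := by
        rw [sum_const, sum_const, nsmul_eq_mul, nsmul_eq_mul,
          ← card_filter_add_card_filter_not (s := S) p]
        push_cast
        ring

lemma sub_mul_card_le_card_agreeSet_inter {F D : Type*} [CommRing F] [IsDomain F] [Fintype D]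
    {u ustar v vstar : D → F} {δ ε : ℝ} (hε : 0 < ε) {K : Finset F} (hK : 1 / ε ≤ #K)
    (h : ∀ x ∈ K, relDist (ustar + x • u) (vstar + x • v) ≤ δ) :
    (1 - δ - ε) * Fintype.card D ≤ #(agreeSet u v ∩ agreeSet ustar vstar) := by
  set C := agreeSet u v ∩ agreeSet ustar vstar
  set B : F → Finset D := fun x => agreeSet (ustar + x • u) (vstar + x • v) \ C
  have hdisj : (K : Set F).PairwiseDisjoint B := by
    intro x _ x' _ hne
    refine disjoint_left.2 fun y hy hy' => (mem_sdiff.1 hy).2 ?_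
    exact agreeSet_add_smul_inter_agreeSet_add_smul_subset hne ustar u vstar v
      (mem_inter.2 ⟨(mem_sdiff.1 hy).1, (mem_sdiff.1 hy').1⟩)
  have hsum : ∑ x ∈ K, (#(B x) : ℝ) ≤ ∑ _x ∈ K, ε * Fintype.card D := by
    rw [sum_const, nsmul_eq_mul, ← mul_assoc]
    calc ∑ x ∈ K, (#(B x) : ℝ) ≤ Fintype.card D :=
          mod_cast (card_biUnion hdisj).symm.trans_le (card_le_univ _)
      _ ≤ #K * ε * Fintype.card D :=
          le_mul_of_one_le_left (Nat.cast_nonneg _) ((div_le_iff₀ hε).1 hK)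
  have hK : K.Nonempty := card_pos.1 (mod_cast (one_div_pos.2 hε).trans_le hK)
  obtain ⟨x, hx, hBx⟩ := exists_le_of_sum_le hK hsum
  have hagree : (1 - δ) * Fintype.card D ≤ #(agreeSet (ustar + x • u) (vstar + x • v)) := by
    rw [card_agreeSet]; gcongr; exact h x hx
  have hsplit : (#(agreeSet (ustar + x • u) (vstar + x • v)) : ℝ) ≤ #(B x) + #C :=
    mod_cast card_le_card_sdiff_add_card
  linarith

lemma exists_line_close_of_le_pow_three {F D : Type*} [Field F] [Fintype D] [Nonempty D]
    {V : Submodule F (D → F)} {lam ε δ : ℝ}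
    (hlam : ∀ v ∈ V, ∀ v' ∈ V, v ≠ v' → lam ≤ relDist v v') (hlam1 : lam ≤ 1) (hδ : δ ≤ 1)
    (hcube : 1 - lam + ε ≤ (1 - δ) ^ 3) {u ustar : D → F} {S : Finset F} (hS : 1 < #S)
    (hclose : ∀ x ∈ S, ∃ w ∈ V, relDist (ustar + x • u) w ≤ δ) :
    ∃ v ∈ V, ∃ vstar ∈ V, ε * #S - 1 ≤ #{x ∈ S | relDist (ustar + x • u) (vstar + x • v) ≤ δ} := by
  choose! w hwV hw using hclose
  set A : F → Finset D := fun x => agreeSet (ustar + x • u) (w x)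
  obtain ⟨x₁, hx₁, x₂, hx₂, hne, hpair⟩ := exists_ne_le_sum_card_inter_inter hS (θ := 1 - δ)
    (A := A) (by linarith) fun x hx => by rw [card_agreeSet]; gcongr; exact hw x hx
  obtain ⟨v, hv, vstar, hvstar, h₁, h₂⟩ := V.exists_add_smul_eq hne (hwV x₁ hx₁) (hwV x₂ hx₂)
  refine ⟨v, hv, vstar, hvstar, ?_⟩
  have hline : A x₁ ∩ A x₂ ⊆ agreeSet u v ∩ agreeSet ustar vstar := by
    simpa only [A, ← h₁, ← h₂] using
      agreeSet_add_smul_inter_agreeSet_add_smul_subset hne ustar u vstar v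
  have hoff : ∀ x ∈ S, w x ≠ vstar + x • v →
      (#(A x₁ ∩ A x₂ ∩ A x) : ℝ) ≤ (1 - lam) * Fintype.card D := by
    intro x hx hwx
    calc (#(A x₁ ∩ A x₂ ∩ A x) : ℝ) ≤ #(agreeSet (vstar + x • v) (w x)) := by
          gcongr
          exact (inter_subset_inter_right hline).trans <|
            (inter_subset_inter_right (agreeSet_inter_agreeSet_subset_add_smul _ _ _ _ x)).trans <|
            agreeSet_inter_agreeSet_subset _ _ _
      _ ≤ (1 - lam) * Fintype.card D := by
          rw [card_agreeSet]
          gcongr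
          exact hlam _ (V.add_mem hvstar (V.smul_mem x hv)) _ (hwV x hx) (Ne.symm hwx)
  have hsplit := sum_le_card_filter_mul_add_card_filter_not_mul (S := S)
    (f := fun x => (#(A x₁ ∩ A x₂ ∩ A x) : ℝ)) (a := Fintype.card D)
    (fun x _ _ => mod_cast card_le_univ _) hoff
  set K := {x ∈ S | w x = vstar + x • v}
  have hN : (0 : ℝ) < Fintype.card D := mod_cast Fintype.card_pos
  have hM : (0 : ℝ) ≤ #S * Fintype.card D := by positivity
  have hK : ((1 - lam + ε) * #S - 1) * Fintype.card D ≤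
      (#K + (#S - #K) * (1 - lam)) * Fintype.card D := by
    nlinarith [mul_le_mul_of_nonneg_right hcube hM]
  have hKclose : K ⊆ {x ∈ S | relDist (ustar + x • u) (vstar + x • v) ≤ δ} :=
    fun x hx => mem_filter.2 ⟨(mem_filter.1 hx).1, (mem_filter.1 hx).2 ▸ hw x (mem_filter.1 hx).1⟩
  calc ε * #S - 1 ≤ #K * lam := by nlinarith [le_of_mul_le_mul_right hK hN]
    _ ≤ #K := mul_le_of_le_one_right (Nat.cast_nonneg _) hlam1
    _ ≤ _ := mod_cast card_le_card hKclose

lemma le_one_of_ne_bot {R D : Type*} [Semiring R] [Fintype D] {V : Submodule R (D → R)} {lam : ℝ}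
    (hlam : ∀ v ∈ V, ∀ v' ∈ V, v ≠ v' → lam ≤ relDist v v') (hV : V ≠ ⊥) : lam ≤ 1 := by
  obtain ⟨a, ha, ha0⟩ := Submodule.exists_mem_ne_zero_of_ne_bot hV
  exact (hlam a ha 0 V.zero_mem ha0).trans (relDist_le_one a 0)

lemma le_one_sub_pow_three {a δ : ℝ} (ha : 0 ≤ a) (h : δ < 1 - a ^ (1 / 3 : ℝ)) :
    a ≤ (1 - δ) ^ 3 :=
  calc a = (a ^ (1 / 3 : ℝ)) ^ 3 := by
        rw [show (1 / 3 : ℝ) = ((3 : ℕ) : ℝ)⁻¹ by norm_num,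
          Real.rpow_inv_natCast_pow ha (by norm_num)]
    _ ≤ (1 - δ) ^ 3 := pow_le_pow_left₀ (Real.rpow_nonneg ha _) (by linarith) 3

lemma exists_line_close {F D : Type*} [Field F] [Fintype D] [Nonempty D]
    {V : Submodule F (D → F)} {lam ε δ : ℝ}
    (hlam : ∀ v ∈ V, ∀ v' ∈ V, v ≠ v' → lam ≤ relDist v v') (hε : 0 < ε) (hε1 : ε ≤ 1)
    (hδ : δ < 1 - (1 - lam + ε) ^ (1 / 3 : ℝ)) {u ustar : D → F} {S : Finset F} (hS : 1 < #S)
    (hclose : ∀ x ∈ S, ∃ w ∈ V, relDist (ustar + x • u) w ≤ δ) :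
    ∃ v ∈ V, ∃ vstar ∈ V, ε * #S - 1 ≤ #{x ∈ S | relDist (ustar + x • u) (vstar + x • v) ≤ δ} := by
  rcases eq_or_ne V ⊥ with rfl | hV
  · refine ⟨0, zero_mem _, 0, zero_mem _, ?_⟩
    rw [filter_true_of_mem fun x hx => ?_]
    · nlinarith [(#S).cast_nonneg (α := ℝ)]
    obtain ⟨w, hw, hwx⟩ := hclose x hx
    simpa [(Submodule.mem_bot F).1 hw] using hwx
  have hlam1 := le_one_of_ne_bot hlam hV
  have hbase : 0 ≤ 1 - lam + ε := by linarith
  exact exists_line_close_of_le_pow_three hlam hlam1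
    (by linarith [Real.rpow_nonneg hbase (1 / 3)]) (le_one_sub_pow_three hbase hδ) hS hclose

lemma one_div_le_mul_sub_one {ε M : ℝ} (hε : 0 < ε) (hε1 : ε ≤ 1) (hM : 2 / ε ^ 2 ≤ M) :
    1 / ε ≤ ε * M - 1 := by
  have h2 : 2 / ε ≤ ε * M := by
    calc 2 / ε = ε * (2 / ε ^ 2) := by field_simp
      _ ≤ ε * M := by gcongr
  have h1 : 1 ≤ 1 / ε := by rw [le_div_iff₀ hε]; linarith
  linarith [show 2 / ε = 1 / ε + 1 / ε by ring]

theorem stmt1_general {F D : Type*} [Field F] [Fintype F] [Fintype D]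
    (V : Submodule F (D → F)) (lam ε δ : ℝ)
    (hlam : ∀ v ∈ V, ∀ v' ∈ V, v ≠ v' → lam ≤ relDist v v')
    (hε : 0 < ε) (hε3 : ε < 1/3)
    (hδ : δ < 1 - (1 - lam + ε) ^ ((1:ℝ)/3))
    (u ustar : D → F)
    (hpr : 2 / (ε ^ 2 * Fintype.card F) ≤
      (({x : F | ∃ v ∈ V, relDist (ustar + x • u) v < δ} : Set F).ncard : ℝ)
        / (Fintype.card F)) :
    ∃ v ∈ V, ∃ vstar ∈ V, ∃ C : Finset D,
      ((1 - δ - ε) * Fintype.card D ≤ (C.card : ℝ)) ∧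
      (∀ y ∈ C, u y = v y) ∧ (∀ y ∈ C, ustar y = vstar y) := by
  rcases isEmpty_or_nonempty D with hD | hD
  · exact ⟨0, V.zero_mem, 0, V.zero_mem, ∅, by simp, by simp, by simp⟩
  set S := ({x : F | ∃ v ∈ V, relDist (ustar + x • u) v < δ} : Set F).toFinset
  have hM : 1 / ε ≤ ε * #S - 1 := by
    rw [Set.ncard_eq_toFinset_card', ← div_div,
      div_le_div_iff_of_pos_right (by exact_mod_cast Fintype.card_pos)] at hpr
    exact one_div_le_mul_sub_one hε (by linarith) hpr
  have hS : 1 < #S := by exact_mod_cast (by nlinarith [one_div_pos.2 hε] : (1 : ℝ) < #S)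
  have hclose : ∀ x ∈ S, ∃ w ∈ V, relDist (ustar + x • u) w ≤ δ := fun x hx => by
    obtain ⟨w, hw, hwx⟩ := Set.mem_toFinset.1 hx
    exact ⟨w, hw, hwx.le⟩
  obtain ⟨v, hv, vstar, hvstar, hK⟩ := exists_line_close hlam hε (by linarith) hδ hS hclose
  refine ⟨v, hv, vstar, hvstar, agreeSet u v ∩ agreeSet ustar vstar, ?_,
    fun y hy => mem_agreeSet.1 (mem_inter.1 hy).1, fun y hy => mem_agreeSet.1 (mem_inter.1 hy).2⟩
  exact sub_mul_card_le_card_agreeSet_inter hε (hM.trans hK) fun x hx => (mem_filter.1 hx).2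

theorem stmt1 {F D : Type*} [Field F] [Fintype F] [Fintype D]
    (V : Submodule F (D → F)) (lam ε δ : ℝ)
    (hlam : ∀ v ∈ V, ∀ v' ∈ V, v ≠ v' → lam ≤ relDist v v')
    (hε : 0 < ε) (hε3 : ε < 1/3) (hδ0 : 0 < δ)
    (hδ : δ < 1 - (1 - lam + ε) ^ ((1:ℝ)/3))
    (u ustar : D → F)
    (hpr : 2 / (ε ^ 2 * Fintype.card F) ≤
      (({x : F | ∃ v ∈ V, relDist (ustar + x • u) v < δ} : Set F).ncard : ℝ)
        / (Fintype.card F)) :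
    ∃ v ∈ V, ∃ vstar ∈ V, ∃ C : Finset D,
      ((1 - δ - ε) * Fintype.card D ≤ (C.card : ℝ)) ∧
      (∀ y ∈ C, u y = v y) ∧ (∀ y ∈ C, ustar y = vstar y) :=
  stmt1_general V lam ε δ hlam hε hε3 hδ u ustar hpr
end

section
/- Let V ⊆ F^D be a code (any subset) with relative minimum distance at least 1-ρ, for ρ ∈ (0,1). Then for every ε ∈ (0, 1-√ρ), V is (1-√ρ-ε, 1/(2ε√ρ))-list-decodable: for every u ∈ F^D, the number of codewords v ∈ V with Δ(u,v) < 1-√ρ-ε is at most 1/(2ε√ρ). -/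
open Finset
open scoped Classical

set_option maxHeartbeats 1000000

theorem stmt5 {F D : Type*} [Fintype D] (V : Set (D → F)) (ρ ε : ℝ)
    (hρ0 : 0 < ρ) (hρ1 : ρ < 1)
    (hdist : ∀ v ∈ V, ∀ v' ∈ V, v ≠ v' → 1 - ρ ≤ relDist v v')
    (hε : 0 < ε) (hε' : ε < 1 - Real.sqrt ρ) (u : D → F) :
    (({v ∈ V | relDist u v < 1 - Real.sqrt ρ - ε} : Set (D → F)).ncard : ℝ)
      ≤ 1 / (2 * ε * Real.sqrt ρ) := by
  set s := Real.sqrt ρ with hs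
  have hs0 : (0:ℝ) < s := Real.sqrt_pos.2 hρ0
  have hssq : s ^ 2 = ρ := Real.sq_sqrt hρ0.le
  have hs1 : s < 1 := by nlinarith
  have hden : (0:ℝ) < 2 * ε * s := by positivity
  set S : Set (D → F) := {v ∈ V | relDist u v < 1 - s - ε} with hSdef
  have hmemS : ∀ v, v ∈ S ↔ v ∈ V ∧ relDist u v < 1 - s - ε := by
    intro v; rfl
  -- trivial case: domain empty
  rcases Nat.eq_zero_or_pos (Fintype.card D) with hn | hn
  · have hD : IsEmpty D := Fintype.card_eq_zero_iff.mp hn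
    have hsub : S.Subsingleton := by
      intro a _ b _
      funext i
      exact (hD.false i).elim
    rcases hsub.eq_empty_or_singleton with h | ⟨x, h⟩
    · rw [h]; simp; positivity
    · rw [h, Set.ncard_singleton]
      rw [le_div_iff₀ hden]
      push_cast
      nlinarith [sq_nonneg (2*s - 1)]
  have hnR : (0:ℝ) < (Fintype.card D : ℝ) := by exact_mod_cast hn
  by_cases hfin : S.Finite
  swap
  · rw [Set.Infinite.ncard hfin]
    norm_num
    positivity
  set T : Finset (D → F) := hfin.toFinset with hT
  have hmemT : ∀ v, v ∈ T ↔ v ∈ V ∧ relDist u v < 1 - s - ε := by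
    intro v; rw [hT, Set.Finite.mem_toFinset]; exact hmemS v
  have hcard : (S.ncard : ℝ) = (T.card : ℝ) := by
    rw [Set.ncard_eq_toFinset_card S hfin]
  rw [hcard]
  rcases T.eq_empty_or_nonempty with hTe | hTne
  · rw [hTe]; simp; positivity
  set n := Fintype.card D with hnd
  -- per-codeword agreement lower bound
  have hagree : ∀ v ∈ T, ((s + ε) * n : ℝ) < ((univ.filter fun i => u i = v i).card : ℝ) := by
    intro v hv
    obtain ⟨hvV, hvd⟩ := (hmemT v).1 hv
    rw [relDist, div_lt_iff₀ hnR] at hvd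
    have h2 : ((univ.filter fun i => u i ≠ v i).card)
        + ((univ.filter fun i => ¬ u i ≠ v i).card) = n :=
      Finset.card_filter_add_card_filter_not _
    have h3 : (univ.filter fun i => ¬ u i ≠ v i) = (univ.filter fun i => u i = v i) := by
      simp [not_not]
    rw [h3] at h2
    have h2R : ((univ.filter fun i => u i ≠ v i).card : ℝ)
        + ((univ.filter fun i => u i = v i).card : ℝ) = (n : ℝ) := by exact_mod_cast h2
    nlinarith
  -- pairwise agreement upper bound
  have hpair : ∀ v ∈ T, ∀ w ∈ T, v ≠ w →
      ((univ.filter fun i => u i = v i ∧ u i = w i).card : ℝ) ≤ ρ * n := by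
    intro v hv w hw hvw
    have hd := hdist v ((hmemT v).1 hv).1 w ((hmemT w).1 hw).1 hvw
    rw [relDist, le_div_iff₀ hnR] at hd
    have hsub : (univ.filter fun i => u i = v i ∧ u i = w i)
        ⊆ (univ.filter fun i => ¬ v i ≠ w i) := by
      intro i hi
      simp only [Finset.mem_filter, Finset.mem_univ, true_and] at hi ⊢
      exact not_not.2 (hi.1.symm.trans hi.2)
    have h2 : ((univ.filter fun i => v i ≠ w i).card)
        + ((univ.filter fun i => ¬ v i ≠ w i).card) = n :=
      Finset.card_filter_add_card_filter_not _
    have h4 := Finset.card_le_card hsub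
    have h2R : ((univ.filter fun i => v i ≠ w i).card : ℝ)
        + ((univ.filter fun i => ¬ v i ≠ w i).card : ℝ) = (n : ℝ) := by exact_mod_cast h2
    have h4R : ((univ.filter fun i => u i = v i ∧ u i = w i).card : ℝ)
        ≤ ((univ.filter fun i => ¬ v i ≠ w i).card : ℝ) := by exact_mod_cast h4
    nlinarith
  -- counting function
  set m : D → ℕ := fun i => (T.filter fun v => u i = v i).card with hm
  have hsum1 : ∑ i, m i = ∑ v ∈ T, (univ.filter fun i => u i = v i).card := by
    simp only [hm, Finset.card_filter]
    exact Finset.sum_comm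
  have hsum2 : ∑ i, m i * m i
      = ∑ v ∈ T, ∑ w ∈ T, (univ.filter fun i => u i = v i ∧ u i = w i).card := by
    have key : ∀ i, m i * m i = ∑ v ∈ T, ∑ w ∈ T, (if u i = v i ∧ u i = w i then 1 else 0) := by
      intro i
      have hmi : m i = ∑ v ∈ T, (if u i = v i then 1 else 0) := Finset.card_filter _ _
      rw [hmi, Finset.sum_mul_sum]
      refine Finset.sum_congr rfl fun v _ => Finset.sum_congr rfl fun w _ => ?_
      by_cases h1 : u i = v i <;> by_cases h2 : u i = w i <;> simp [h1, h2]
    simp only [key, Finset.card_filter]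
    rw [Finset.sum_comm]
    refine Finset.sum_congr rfl fun v _ => Finset.sum_comm
  -- lower bound on total agreement
  have hA : (T.card : ℝ) * ((s + ε) * n) < ∑ i, (m i : ℝ) := by
    have : ∑ _v ∈ T, ((s + ε) * (n:ℝ)) < ∑ v ∈ T, ((univ.filter fun i => u i = v i).card : ℝ) :=
      Finset.sum_lt_sum_of_nonempty hTne hagree
    rw [Finset.sum_const, nsmul_eq_mul] at this
    calc (T.card : ℝ) * ((s + ε) * n) < ∑ v ∈ T, ((univ.filter fun i => u i = v i).card : ℝ) := this
      _ = ∑ i, (m i : ℝ) := by rw [← Nat.cast_sum, ← Nat.cast_sum, hsum1]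
  -- upper bound on sum of squares
  have hB : ∑ i, (m i : ℝ) * (m i : ℝ)
      ≤ (T.card : ℝ) * (n + ((T.card : ℝ) - 1) * (ρ * n)) := by
    have h1 : ∑ i, (m i : ℝ) * (m i : ℝ)
        = ∑ v ∈ T, ∑ w ∈ T, ((univ.filter fun i => u i = v i ∧ u i = w i).card : ℝ) := by
      exact_mod_cast congrArg (fun k : ℕ => (k : ℝ)) hsum2
    rw [h1]
    have hinner : ∀ v ∈ T, ∑ w ∈ T, ((univ.filter fun i => u i = v i ∧ u i = w i).card : ℝ)
        ≤ (n : ℝ) + ((T.card : ℝ) - 1) * (ρ * n) := by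
      intro v hv
      rw [← Finset.add_sum_erase _ _ hv]
      have hdiag : ((univ.filter fun i => u i = v i ∧ u i = v i).card : ℝ) ≤ (n : ℝ) := by
        exact_mod_cast Finset.card_le_card (Finset.filter_subset _ _) |>.trans_eq (by simp [hnd])
      have hoff : ∑ w ∈ T.erase v, ((univ.filter fun i => u i = v i ∧ u i = w i).card : ℝ)
          ≤ ((T.erase v).card : ℝ) * (ρ * n) := by
        apply Finset.sum_le_card_nsmul _ _ (ρ * (n:ℝ)) ?_ |>.trans_eq (by rw [nsmul_eq_mul])
        intro w hw
        exact hpair v hv w (Finset.mem_of_mem_erase hw) (Ne.symm (Finset.ne_of_mem_erase hw))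
      have hce : ((T.erase v).card : ℝ) = (T.card : ℝ) - 1 := by
        rw [Finset.card_erase_of_mem hv]
        have : 1 ≤ T.card := Finset.card_pos.2 hTne
        push_cast [this]
        ring
      rw [hce] at hoff
      linarith
    calc ∑ v ∈ T, ∑ w ∈ T, ((univ.filter fun i => u i = v i ∧ u i = w i).card : ℝ)
        ≤ ∑ _v ∈ T, ((n : ℝ) + ((T.card : ℝ) - 1) * (ρ * n)) := Finset.sum_le_sum hinner
      _ = (T.card : ℝ) * (n + ((T.card : ℝ) - 1) * (ρ * n)) := by
          rw [Finset.sum_const, nsmul_eq_mul]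
  -- Cauchy–Schwarz
  have hCS : (∑ i, (m i : ℝ)) ^ 2 ≤ (n : ℝ) * ∑ i, (m i : ℝ) * (m i : ℝ) := by
    have := sq_sum_le_card_mul_sum_sq (s := (univ : Finset D)) (f := fun i => (m i : ℝ))
    simpa [hnd, sq, Finset.card_univ] using this
  -- put it together
  set Lr := (T.card : ℝ) with hLr
  have hLr1 : (1:ℝ) ≤ Lr := by
    have h0 : 0 < T.card := Finset.card_pos.2 hTne
    rw [hLr]
    exact_mod_cast h0
  set M := ∑ i, (m i : ℝ) with hM
  have hA0 : (0:ℝ) ≤ Lr * ((s + ε) * n) :=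
    mul_nonneg (by linarith) (mul_nonneg (by linarith) hnR.le)
  have h5 : (Lr * ((s + ε) * n)) ^ 2 < M ^ 2 := by
    apply pow_lt_pow_left₀ hA hA0
    norm_num
  have h6 : Lr ^ 2 * (s + ε) ^ 2 * (n:ℝ) ^ 2 < (n:ℝ) ^ 2 * Lr * (1 + (Lr - 1) * ρ) := by
    have hBn := mul_le_mul_of_nonneg_left hB hnR.le
    calc Lr ^ 2 * (s + ε) ^ 2 * (n:ℝ) ^ 2 = (Lr * ((s + ε) * n)) ^ 2 := by ring
      _ < M ^ 2 := h5
      _ ≤ (n : ℝ) * ∑ i, (m i : ℝ) * (m i : ℝ) := hCS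
      _ ≤ (n : ℝ) * (Lr * (n + (Lr - 1) * (ρ * n))) := hBn
      _ = (n:ℝ) ^ 2 * Lr * (1 + (Lr - 1) * ρ) := by ring
  have h7 : Lr * (s + ε) ^ 2 < 1 + (Lr - 1) * ρ := by
    have hpos : (0:ℝ) ≤ (n:ℝ) ^ 2 * Lr := by nlinarith
    refine lt_of_mul_lt_mul_left ?_ hpos
    calc (n:ℝ) ^ 2 * Lr * (Lr * (s + ε) ^ 2) = Lr ^ 2 * (s + ε) ^ 2 * (n:ℝ) ^ 2 := by ring
      _ < (n:ℝ) ^ 2 * Lr * (1 + (Lr - 1) * ρ) := h6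
  rw [le_div_iff₀ hden]
  nlinarith [mul_nonneg (by linarith : (0:ℝ) ≤ Lr) (sq_nonneg ε)]
end

section
/- Let L ⊆ F_q be a finite set, z ∈ F_q with z ∉ L, d ≥ 1 an integer, f : L → F_q, b ∈ F_q, and δ > 0. Define g : L → F_q by g(y) = (f(y) - b)/(y - z). Then the following are equivalent: (1) there exists a polynomial Q of degree ≤ d-1 with Δ(g, Q|_L) < δ; (2) there exists a polynomial R of degree ≤ d with Δ(f, R|_L) < δ and R(z) = b. -/
open Finset Polynomial
open scoped Classical

theorem stmt6 {F : Type*} [Field F] (L : Finset F) (z : F) (hz : z ∉ L)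
    (d : ℕ) (hd : 1 ≤ d) (f : ↥L → F) (b : F) (δ : ℝ) (hδ : 0 < δ) :
    (∃ Q : Polynomial F, Q.degree ≤ (d - 1 : ℕ) ∧
        relDist (fun y : ↥L => (f y - b) / ((y : F) - z)) (fun y : ↥L => Q.eval (y : F)) < δ) ↔
    (∃ R : Polynomial F, R.degree ≤ (d : ℕ) ∧
        relDist f (fun y : ↥L => R.eval (y : F)) < δ ∧ R.eval z = b) := by
  have hyz : ∀ y : ↥L, (y : F) - z ≠ 0 := by
    intro y h
    exact hz (sub_eq_zero.mp h ▸ y.2)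
  constructor
  · rintro ⟨Q, hQd, hQδ⟩
    refine ⟨Q * (X - C z) + C b, ?_, ?_, by simp⟩
    · refine le_trans (degree_add_le _ _) ?_
      refine max_le (le_trans (degree_mul_le _ _) ?_)
        (le_trans degree_C_le (by exact_mod_cast Nat.zero_le d))
      calc Q.degree + (X - C z).degree ≤ (d - 1 : ℕ) + 1 :=
            add_le_add hQd (le_of_eq (degree_X_sub_C z))
        _ = (d : ℕ) := by exact_mod_cast congrArg (Nat.cast : ℕ → WithBot ℕ) (Nat.sub_add_cancel hd)
    · have hset : relDist (fun y : ↥L => (f y - b) / ((y : F) - z))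
          (fun y : ↥L => Q.eval (y : F))
          = relDist f (fun y : ↥L => (Q * (X - C z) + C b).eval (y : F)) := by
        unfold relDist
        congr 3
        apply Finset.filter_congr
        intro y _
        simp only [eval_add, eval_mul, eval_sub, eval_X, eval_C, ne_eq, eq_iff_iff]
        rw [not_iff_not, div_eq_iff (hyz y), sub_eq_iff_eq_add]
      rw [← hset]; exact hQδ
  · rintro ⟨R, hRd, hRδ, hRz⟩
    have hdvd : (X - C z) ∣ (R - C b) := by
      rw [dvd_iff_isRoot]; simp [IsRoot, hRz]
    obtain ⟨Q, hQ⟩ := hdvd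
    have hRy : ∀ y : F, R.eval y = Q.eval y * (y - z) + b := by
      intro y
      have := congrArg (Polynomial.eval y) hQ
      simp only [eval_sub, eval_mul, eval_X, eval_C] at this
      linear_combination this
    refine ⟨Q, ?_, ?_⟩
    · by_cases hQ0 : Q = 0
      · simp [hQ0]
      · have h1 : ((X - C z) * Q).degree ≤ (d : WithBot ℕ) := by
          rw [← hQ]
          exact le_trans (degree_sub_le _ _)
            (max_le hRd (le_trans degree_C_le (by exact_mod_cast Nat.zero_le d)))
        rw [degree_mul, degree_X_sub_C] at h1
        rw [degree_eq_natDegree hQ0] at h1 ⊢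
        have h2 : (1 : ℕ) + Q.natDegree ≤ d := by exact_mod_cast h1
        exact_mod_cast Nat.le_sub_of_add_le (by omega)
    · have hset : relDist f (fun y : ↥L => R.eval (y : F))
          = relDist (fun y : ↥L => (f y - b) / ((y : F) - z)) (fun y : ↥L => Q.eval (y : F)) := by
        unfold relDist
        congr 3
        apply Finset.filter_congr
        intro y _
        simp only [ne_eq, eq_iff_iff]
        rw [not_iff_not, div_eq_iff (hyz y), sub_eq_iff_eq_add, hRy]
      rw [← hset]; exact hRδ
end

section
/- Let V ⊆ F_q^D be a linear code with relative minimum distance λ, and let P, P', P'' ∈ V and distinct x₀, β₀, γ ∈ F_q. Suppose there exists a set S ⊆ D with |S| > (1-λ)|D| such that the three points (x₀, P|_S), (β₀, P'|_S), (γ, P''|_S) in F_q × F_q^S are collinear. Then (x₀, P), (β₀, P'), (γ, P'') are collinear in F_q × F_q^D. -/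
open Finset
open scoped Classical

theorem stmt9 {F D : Type*} [Field F] [Fintype D] (V : Submodule F (D → F)) (lam : ℝ)
    (hlam : ∀ w ∈ V, ∀ w' ∈ V, w ≠ w' → lam ≤ relDist w w')
    (P P' P'' : D → F) (hP : P ∈ V) (hP' : P' ∈ V) (hP'' : P'' ∈ V)
    (x₀ β₀ γ : F) (hxb : x₀ ≠ β₀) (hxg : x₀ ≠ γ) (hbg : β₀ ≠ γ)
    (S : Finset D) (hScard : ((1 : ℝ) - lam) * Fintype.card D < S.card)
    (hcol : ∃ ws wd : D → F, (∀ y ∈ S, P y = ws y + x₀ * wd y) ∧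
        (∀ y ∈ S, P' y = ws y + β₀ * wd y) ∧ (∀ y ∈ S, P'' y = ws y + γ * wd y)) :
    ∃ ws wd : D → F, P = ws + x₀ • wd ∧ P' = ws + β₀ • wd ∧ P'' = ws + γ • wd := by
  obtain ⟨ws0, wd0, h1, h2, h3⟩ := hcol
  have hsub : β₀ - x₀ ≠ 0 := sub_ne_zero.mpr (Ne.symm hxb)
  set wd : D → F := (β₀ - x₀)⁻¹ • (P' - P) with hwd
  set ws : D → F := P - x₀ • wd with hws
  have hwdV : wd ∈ V := V.smul_mem _ (V.sub_mem hP' hP)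
  have hwsV : ws ∈ V := V.sub_mem hP (V.smul_mem _ hwdV)
  have hPeq : P = ws + x₀ • wd := by simp [hws]
  have hP'eq : P' = ws + β₀ • wd := by
    funext i
    simp only [hws, hwd, Pi.add_apply, Pi.sub_apply, Pi.smul_apply, smul_eq_mul]
    field_simp
    ring
  have hQV : ws + γ • wd ∈ V := V.add_mem hwsV (V.smul_mem _ hwdV)
  have hagree : ∀ y ∈ S, P'' y = (ws + γ • wd) y := by
    intro y hy
    have e1 := h1 y hy
    have e2 := h2 y hy
    have e3 := h3 y hy
    have hwdy : wd y = wd0 y := by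
      simp only [hwd, Pi.smul_apply, Pi.sub_apply, smul_eq_mul]
      rw [e1, e2]
      field_simp
      ring
    have hwsy : ws y = ws0 y := by
      simp only [hws, Pi.sub_apply, Pi.smul_apply, smul_eq_mul, hwdy, e1]
      ring
    simp only [Pi.add_apply, Pi.smul_apply, smul_eq_mul, e3, hwsy, hwdy]
  have hP''eq : P'' = ws + γ • wd := by
    by_contra hne
    have hl := hlam P'' hP'' _ hQV hne
    unfold relDist at hl
    set T := Finset.univ.filter (fun i => P'' i ≠ (ws + γ • wd) i) with hT
    rcases Nat.eq_zero_or_pos (Fintype.card D) with h0 | hpos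
    · have hS0 : S.card = 0 := Nat.le_zero.mp (h0 ▸ Finset.card_le_univ S)
      rw [h0, hS0] at hScard
      norm_num at hScard
    · have hTS : T ⊆ Sᶜ := by
        intro i hi
        simp only [hT, Finset.mem_filter] at hi
        simp only [Finset.mem_compl]
        intro hiS
        exact hi.2 (hagree i hiS)
      have hTcard : T.card ≤ Fintype.card D - S.card := by
        calc T.card ≤ Sᶜ.card := Finset.card_le_card hTS
        _ = Fintype.card D - S.card := by rw [Finset.card_compl]
      have hTcardR : (T.card : ℝ) ≤ (Fintype.card D : ℝ) - S.card := by
        have hS : S.card ≤ Fintype.card D := Finset.card_le_univ S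
        push_cast [Nat.cast_sub hS] at hTcard ⊢
        exact_mod_cast hTcard
      have hn : (0 : ℝ) < (Fintype.card D : ℝ) := by exact_mod_cast hpos
      rw [le_div_iff₀ hn] at hl
      nlinarith [hl, hTcardR, hScard]
  exact ⟨ws, wd, hPeq, hP'eq, hP''eq⟩
end

section
/- Let V be an [n,k,d]_q linear code that is (δ, L)-list-decodable, with generator matrix G ∈ F_q^{k×n}. Let S ⊆ F_q^k be a σ-robust set of size N. For z ∈ S, b ∈ F_q, let V_{z,b} = {G^T·ℓ ∈ V : ⟨ℓ, z⟩ = b} (codewords whose message vector ℓ has inner product b with z). Let u, u* ∈ F_q^n and for each z ∈ S let B_z(X) be a linear polynomial. If Pr_{x ∈ F_q, z ∈ S}[Δ(u* + x·u, V_{z,B_z(x)}) < δ] ≥ max(2L·(σ/N + ε)^{1/3}, 4/(ε²q)) for some ε ∈ (0, 1/3), then there exist v, v* ∈ V and C ⊆ [n] with |C| ≥ (1-δ-ε)n, u|_C = v|_C, and u*|_C = v*|_C. -/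
open Finset Polynomial
open scoped Classical

/-!
Call `z ∈ S` good at `x` if `Δ(u* + x u, V_{z,B_z(x)}) < δ`, and put `γ = (σ/N + ε)^{1/3}`.
By averaging, at least `2/ε²` points `x` have `LγN` good `z`; as at most `L` messages are
`δ`-close to `u* + x u`, one of them, `ℓ_x`, satisfies `⟨ℓ_x, z⟩ = B_z(x)` for `γN` of the `z`.
Counting triples `x₁, x₂, x₃` with the power-mean inequality `∑ d_z³ ≥ (∑ d_z)³ / N²` yields
`x₁ ≠ x₂` such that for at least `2/ε - 1` points `x₃` the three constraint sets share `σ`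
points of `S`, hence a basis. Since `B_z` is affine, the functional
`(x₂ - x₁) ℓ_{x₃} - (x₂ - x₃) ℓ_{x₁} - (x₃ - x₁) ℓ_{x₂}` vanishes on that basis, so
`ℓ_x = ℓ* + x ℓ` on these points. Off the set `C` where `(u, u*)` agrees with `(ℓ G, ℓ* G)`,
the lines `x ↦ u* + x u` and `x ↦ ℓ* G + x ℓ G` meet at most once, and double counting the
disagreements against the distance bound `δ n` gives `|C| ≥ (1 - δ - ε) n`.
-/

theorem relDist_nonneg {D F : Type*} [Fintype D] (u v : D → F) : 0 ≤ relDist u v := by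
  unfold relDist; positivity

section Counting

variable {α β : Type*} [DecidableEq β]

theorem sum_le_mul_card_add_mul_card_filter_le (s : Finset α) (f : α → ℝ) {t M : ℝ}
    (ht : 0 ≤ t) (hM : ∀ x ∈ s, f x ≤ M) :
    ∑ x ∈ s, f x ≤ t * #s + M * #(s.filter (t ≤ f ·)) := by
  rw [← sum_filter_add_sum_filter_not s (t ≤ f ·)]
  have hhigh : ∑ x ∈ s.filter (t ≤ f ·), f x ≤ #(s.filter (t ≤ f ·)) • M :=
    sum_le_card_nsmul _ f M fun x hx => hM x (mem_filter.1 hx).1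
  have hlow : ∑ x ∈ s.filter (¬ t ≤ f ·), f x ≤ #(s.filter (¬ t ≤ f ·)) • t :=
    sum_le_card_nsmul _ f t fun x hx => (not_le.1 (mem_filter.1 hx).2).le
  have hcard : (#(s.filter (¬ t ≤ f ·)) : ℝ) ≤ #s := by exact_mod_cast card_filter_le _ _
  rw [nsmul_eq_mul] at hhigh hlow
  linarith [mul_le_mul_of_nonneg_right hcard ht]

theorem exists_le_card_of_subset_biUnion {ι : Type*} {s : Finset ι} {t : ι → Finset β}
    {A : Finset β} {c : ℝ} (hA : A ⊆ s.biUnion t) (hA₀ : A.Nonempty) (hc : #s * c ≤ #A) :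
    ∃ i ∈ s, c ≤ #(t i) := by
  by_contra! h
  have hs : s.Nonempty := by
    obtain ⟨z, hz⟩ := hA₀
    obtain ⟨i, hi, -⟩ := mem_biUnion.1 (hA hz)
    exact ⟨i, hi⟩
  have : (#A : ℝ) < #s * c := calc
    (#A : ℝ) ≤ ∑ i ∈ s, (#(t i) : ℝ) := by exact_mod_cast (card_le_card hA).trans card_biUnion_le
    _ < ∑ _i ∈ s, c := sum_lt_sum_of_nonempty hs h
    _ = #s * c := by rw [sum_const, nsmul_eq_mul]
  linarith

theorem sum_card_eq_sum_card_filter_mem_s11 (X : Finset α) (S : Finset β) (Z : α → Finset β)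
    (hZ : ∀ x, Z x ⊆ S) : ∑ x ∈ X, #(Z x) = ∑ z ∈ S, #(X.filter (z ∈ Z ·)) := by
  simp only [card_filter]
  rw [sum_comm]
  refine sum_congr rfl fun x _ => ?_
  rw [← card_filter, filter_mem_eq_inter, inter_eq_right.2 (hZ x)]

theorem sum_card_inter_inter_eq_sum_pow (X : Finset α) (S : Finset β) (Z : α → Finset β)
    (hZ : ∀ x, Z x ⊆ S) :
    ∑ x₁ ∈ X, ∑ x₂ ∈ X, ∑ x₃ ∈ X, #(Z x₁ ∩ Z x₂ ∩ Z x₃) = ∑ z ∈ S, #(X.filter (z ∈ Z ·)) ^ 3 := by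
  set f : α → β → ℕ := fun x z => if z ∈ Z x then 1 else 0
  have hinter : ∀ x₁ x₂ x₃, #(Z x₁ ∩ Z x₂ ∩ Z x₃) = ∑ z ∈ S, f x₁ z * f x₂ z * f x₃ z := by
    intro x₁ x₂ x₃
    have hsub : Z x₁ ∩ Z x₂ ∩ Z x₃ ⊆ S := inter_subset_left.trans (inter_subset_left.trans (hZ x₁))
    rw [← inter_eq_right.2 hsub, ← filter_mem_eq_inter, card_filter]
    refine sum_congr rfl fun z _ => ?_
    simp only [f, mem_inter]
    split_ifs <;> simp_all
  have hdeg : ∀ z, #(X.filter (z ∈ Z ·)) ^ 3 =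
      ∑ x₁ ∈ X, ∑ x₂ ∈ X, ∑ x₃ ∈ X, f x₁ z * f x₂ z * f x₃ z := by
    intro z
    rw [card_filter, pow_three, sum_mul_sum, sum_mul_sum]
    simp only [mul_sum, mul_assoc, f]
  simp only [hinter, hdeg]
  exact (sum_comm.trans (sum_congr rfl fun x₁ _ =>
    sum_comm.trans (sum_congr rfl fun x₂ _ => sum_comm))).symm

theorem sum_card_pow_three_le (X : Finset α) (S : Finset β) (Z : α → Finset β)
    (hZ : ∀ x, Z x ⊆ S) :
    (∑ x ∈ X, (#(Z x) : ℝ)) ^ 3 ≤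
      #S ^ 2 * ∑ x₁ ∈ X, ∑ x₂ ∈ X, ∑ x₃ ∈ X, (#(Z x₁ ∩ Z x₂ ∩ Z x₃) : ℝ) := by
  have hdeg : ∑ x ∈ X, (#(Z x) : ℝ) = ∑ z ∈ S, (#(X.filter (z ∈ Z ·)) : ℝ) := by
    exact_mod_cast sum_card_eq_sum_card_filter_mem_s11 X S Z hZ
  have hcube : ∑ x₁ ∈ X, ∑ x₂ ∈ X, ∑ x₃ ∈ X, (#(Z x₁ ∩ Z x₂ ∩ Z x₃) : ℝ) =
      ∑ z ∈ S, (#(X.filter (z ∈ Z ·)) : ℝ) ^ 3 := by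
    exact_mod_cast sum_card_inter_inter_eq_sum_pow X S Z hZ
  rw [hdeg, hcube]
  rcases S.eq_empty_or_nonempty with rfl | hS
  · simp
  have := pow_sum_div_card_le_sum_pow (s := S) (f := fun z => (#(X.filter (z ∈ Z ·)) : ℝ))
    (fun _ _ => by positivity) 2
  rwa [div_le_iff₀' (by positivity)] at this

theorem exists_ne_sub_one_le_of_le_sum_sum (X : Finset α) (g : α → α → ℝ) {ε : ℝ}
    (hX : 1 < ε * #X) (hdiag : ∀ x ∈ X, g x x ≤ #X)
    (hsum : ε * #X ^ 3 ≤ ∑ x ∈ X, ∑ y ∈ X, g x y) :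
    ∃ x ∈ X, ∃ y ∈ X, x ≠ y ∧ ε * #X - 1 ≤ g x y := by
  by_contra! h
  have hrow : ∀ x ∈ X, ∑ y ∈ X, g x y ≤ #X + (#X - 1) * (ε * #X - 1) := by
    intro x hx
    rw [← add_sum_erase X _ hx]
    have hrest : ∑ y ∈ X.erase x, g x y ≤ #(X.erase x) • (ε * #X - 1) :=
      sum_le_card_nsmul _ _ _ fun y hy =>
        (h x hx y (mem_of_mem_erase hy) (ne_of_mem_erase hy).symm).le
    rw [nsmul_eq_mul, card_erase_of_mem hx, Nat.cast_sub (card_pos.2 ⟨x, hx⟩), Nat.cast_one]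
      at hrest
    linarith [hdiag x hx]
  have htotal := sum_le_card_nsmul X _ _ hrow
  rw [nsmul_eq_mul] at htotal
  have hX₀ : (0 : ℝ) < #X :=
    (Nat.cast_nonneg _).lt_of_ne fun h0 => by rw [← h0, mul_zero] at hX; linarith
  nlinarith [mul_pos hX₀ (sub_pos.2 hX)]

theorem exists_pair_many_large_triple_inter (X : Finset α) (S : Finset β) (Z : α → Finset β)
    (hZ : ∀ x, Z x ⊆ S) (hS : S.Nonempty) {σ : ℕ} {c ε : ℝ} (hc : 0 ≤ c)
    (hcube : c ^ 3 * #S = σ + ε * #S) (hX : 1 < ε * #X) (hZX : ∀ x ∈ X, c * #S ≤ #(Z x)) :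
    ∃ x₁ ∈ X, ∃ x₂ ∈ X, x₁ ≠ x₂ ∧
      ε * #X - 1 ≤ #(X.filter fun x₃ => σ ≤ #(Z x₁ ∩ Z x₂ ∩ Z x₃)) := by
  set total := ∑ x₁ ∈ X, ∑ x₂ ∈ X, ∑ x₃ ∈ X, (#(Z x₁ ∩ Z x₂ ∩ Z x₃) : ℝ)
  set large : α → α → ℝ := fun x₁ x₂ => #(X.filter fun x₃ => σ ≤ #(Z x₁ ∩ Z x₂ ∩ Z x₃))
  have hS₀ : (0 : ℝ) < #S := by exact_mod_cast hS.card_pos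
  have hlow : (σ + ε * #S) * #X ^ 3 ≤ total := by
    have hsum : c * #S * #X ≤ ∑ x ∈ X, (#(Z x) : ℝ) := by
      simpa [mul_comm] using card_nsmul_le_sum X _ _ hZX
    have hpow := (pow_le_pow_left₀ (by positivity) hsum 3).trans (sum_card_pow_three_le X S Z hZ)
    have hexp : (c * #S * #X) ^ 3 = #S ^ 2 * ((σ + ε * #S) * #X ^ 3) := by
      rw [← hcube]; ring
    rw [hexp] at hpow
    exact le_of_mul_le_mul_left hpow (by positivity)
  have hup : total ≤ σ * #X ^ 3 + #S * ∑ x₁ ∈ X, ∑ x₂ ∈ X, large x₁ x₂ := by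
    calc total ≤ ∑ x₁ ∈ X, ∑ x₂ ∈ X, (σ * #X + #S * large x₁ x₂) := by
          refine sum_le_sum fun x₁ _ => sum_le_sum fun x₂ _ => ?_
          have hM : ∀ x₃ ∈ X, (#(Z x₁ ∩ Z x₂ ∩ Z x₃) : ℝ) ≤ #S := fun x₃ _ => by
            exact_mod_cast card_le_card (inter_subset_right.trans (hZ x₃))
          simpa only [large, Nat.cast_le] using
            sum_le_mul_card_add_mul_card_filter_le X _ (Nat.cast_nonneg σ) hM
      _ = σ * #X ^ 3 + #S * ∑ x₁ ∈ X, ∑ x₂ ∈ X, large x₁ x₂ := by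
          simp only [sum_add_distrib, sum_const, nsmul_eq_mul, mul_sum]
          ring
  refine exists_ne_sub_one_le_of_le_sum_sum X large hX
    (fun x _ => by simp only [large]; exact_mod_cast card_filter_le _ _) ?_
  refine le_of_mul_le_mul_left ?_ hS₀
  nlinarith

theorem two_div_sq_le_card_filter {α : Type*} [Fintype α] [Nonempty α] (f : α → ℕ) {N : ℕ}
    (hf : ∀ x, f x ≤ N) {t ε : ℝ} (ht : 0 ≤ t) (hε : 0 < ε)
    (h₁ : 2 * t ≤ (∑ x, f x : ℝ) / (Fintype.card α * N))
    (h₂ : 4 / (ε ^ 2 * Fintype.card α) ≤ (∑ x, f x : ℝ) / (Fintype.card α * N)) :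
    2 / ε ^ 2 ≤ #(univ.filter fun x => t * N ≤ f x) := by
  set q : ℝ := (Fintype.card α : ℝ)
  set P := (∑ x, f x : ℝ) / (q * N)
  have hq : 0 < q := by positivity
  have hP : 0 < P := lt_of_lt_of_le (by positivity) h₂
  have hN : (0 : ℝ) < N := by
    refine (Nat.cast_nonneg N).lt_of_ne fun h0 => ?_
    simp [P, ← h0] at hP
  have hmarkov := sum_le_mul_card_add_mul_card_filter_le univ (fun x => (f x : ℝ))
    (mul_nonneg ht hN.le) fun x _ => (Nat.cast_le.2 (hf x))
  have hsum : (∑ x, f x : ℝ) = P * q * N := by simp only [P]; field_simp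
  rw [hsum, card_univ] at hmarkov
  have hX : P * q ≤ t * q + #(univ.filter fun x => t * N ≤ f x) := by
    refine le_of_mul_le_mul_right ?_ hN
    linarith
  rw [div_le_iff₀ (by positivity)] at h₂
  rw [div_le_iff₀ (by positivity)]
  have hhalf : P * q / 2 ≤ #(univ.filter fun x => t * N ≤ f x) := by nlinarith
  nlinarith [mul_le_mul_of_nonneg_right hhalf (sq_nonneg ε)]

end Counting

open Matrix

section CommRing

variable {R : Type*} [CommRing R]

theorem Polynomial.sub_mul_eval_eq_of_degree_le_one {p : R[X]} (hp : p.degree ≤ 1) (x₁ x₂ x₃ : R) :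
    (x₂ - x₁) * p.eval x₃ = (x₂ - x₃) * p.eval x₁ + (x₃ - x₁) * p.eval x₂ := by
  rw [eq_X_add_C_of_degree_le_one hp]
  simp only [eval_add, eval_mul, eval_C, eval_X]
  ring

theorem card_filter_add_mul_eq_add_mul_le_one [IsDomain R] {a b c d : R} (h : ¬(a = c ∧ b = d))
    (Y : Finset R) : #(Y.filter fun x => b + x * a = d + x * c) ≤ 1 := by
  refine card_le_one.2 fun x hx y hy => ?_
  by_contra hxy
  have hx' := (mem_filter.1 hx).2
  have hy' := (mem_filter.1 hy).2
  have hac : a = c := by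
    have : (x - y) * (a - c) = 0 := by linear_combination hx' - hy'
    exact sub_eq_zero.1 ((mul_eq_zero.1 this).resolve_left (sub_ne_zero.2 hxy))
  exact h ⟨hac, by rw [hac] at hx'; exact add_right_cancel hx'⟩

variable {κ : Type*} [Fintype κ]

theorem eq_zero_of_dotProduct_eq_zero_of_span_eq_top {T : Set (κ → R)}
    (hT : Submodule.span R T = ⊤) {w : κ → R} (hw : ∀ z ∈ T, w ⬝ᵥ z = 0) : w = 0 := by
  have hzero := LinearMap.ext_on hT (f := dotProductBilin R R w) (g := 0)
    fun z hz => by simpa using hw z hz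
  exact dotProduct_eq_zero_iff.1 fun z => by simpa using LinearMap.congr_fun hzero z

theorem sub_smul_eq_of_span_eq_top {T : Set (κ → R)} (hT : Submodule.span R T = ⊤)
    {B : (κ → R) → R[X]} (hB : ∀ z ∈ T, (B z).degree ≤ 1) {x₁ x₂ x₃ : R} {ℓ₁ ℓ₂ ℓ₃ : κ → R}
    (h₁ : ∀ z ∈ T, ℓ₁ ⬝ᵥ z = (B z).eval x₁) (h₂ : ∀ z ∈ T, ℓ₂ ⬝ᵥ z = (B z).eval x₂)
    (h₃ : ∀ z ∈ T, ℓ₃ ⬝ᵥ z = (B z).eval x₃) :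
    (x₂ - x₁) • ℓ₃ = (x₂ - x₃) • ℓ₁ + (x₃ - x₁) • ℓ₂ := by
  refine sub_eq_zero.1 (eq_zero_of_dotProduct_eq_zero_of_span_eq_top hT fun z hz => ?_)
  simp only [sub_dotProduct, add_dotProduct, smul_dotProduct, smul_eq_mul, h₁ z hz, h₂ z hz,
    h₃ z hz]
  exact sub_eq_zero.2 ((B z).sub_mul_eval_eq_of_degree_le_one (hB z hz) x₁ x₂ x₃)

end CommRing

section Field

variable {F : Type*} [Field F] {κ : Type*} [Fintype κ]

/-- `ℓ ∈ V_{z, B_z(x)}` exactly for `z ∈ consistentSet S B x ℓ`. -/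
noncomputable def consistentSet (S : Finset (κ → F)) (B : (κ → F) → F[X]) (x : F) (ℓ : κ → F) :
    Finset (κ → F) :=
  S.filter fun z => ℓ ⬝ᵥ z = (B z).eval x

theorem exists_eq_add_smul_of_robust {S : Finset (κ → F)} {σ : ℕ}
    (hrobust : ∀ T : Finset (κ → F), T ⊆ S → T.card = σ →
      Submodule.span F (T : Set (κ → F)) = ⊤)
    {B : (κ → F) → F[X]} (hB : ∀ z, (B z).degree ≤ 1) {ℓ : F → κ → F} {x₁ x₂ : F}
    (hne : x₁ ≠ x₂) {Y : Finset F}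
    (hY : ∀ x ∈ Y, σ ≤ #(consistentSet S B x₁ (ℓ x₁) ∩ consistentSet S B x₂ (ℓ x₂) ∩
      consistentSet S B x (ℓ x))) :
    ∃ a b : κ → F, ∀ x ∈ Y, ℓ x = b + x • a := by
  refine ⟨(x₂ - x₁)⁻¹ • (ℓ x₂ - ℓ x₁), ℓ x₁ - x₁ • (x₂ - x₁)⁻¹ • (ℓ x₂ - ℓ x₁), fun x hx => ?_⟩
  obtain ⟨T, hTsub, hTcard⟩ := exists_subset_card_eq (hY x hx)
  have hmem : ∀ z ∈ T, z ∈ consistentSet S B x₁ (ℓ x₁) ∧ z ∈ consistentSet S B x₂ (ℓ x₂) ∧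
      z ∈ consistentSet S B x (ℓ x) := fun z hz => by
    simpa only [mem_inter, and_assoc] using hTsub hz
  have hline := sub_smul_eq_of_span_eq_top (T := T)
    (hrobust T (fun z hz => (mem_filter.1 (hmem z hz).1).1) hTcard) (fun z _ => hB z)
    (fun z hz => (mem_filter.1 (hmem z hz).1).2) (fun z hz => (mem_filter.1 (hmem z hz).2.1).2)
    (fun z hz => (mem_filter.1 (hmem z hz).2.2).2)
  have hx₂₁ : x₂ - x₁ ≠ 0 := sub_ne_zero.2 hne.symm
  ext i
  have hi := congrFun hline i
  simp only [Pi.add_apply, Pi.sub_apply, Pi.smul_apply, smul_eq_mul] at hi ⊢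
  field_simp
  linear_combination hi

theorem exists_affine_on_large_subset {S : Finset (κ → F)} (hS : S.Nonempty) {σ : ℕ}
    (hrobust : ∀ T : Finset (κ → F), T ⊆ S → T.card = σ →
      Submodule.span F (T : Set (κ → F)) = ⊤)
    {B : (κ → F) → F[X]} (hB : ∀ z, (B z).degree ≤ 1) {X : Finset F} {ε : ℝ} (hε : 0 < ε)
    (hε₁ : ε < 1) (hX : 2 / ε ^ 2 ≤ #X) {ℓ : F → κ → F}
    (hℓ : ∀ x ∈ X, ((σ / #S : ℝ) + ε) ^ ((1 : ℝ) / 3) * #S ≤ #(consistentSet S B x (ℓ x))) :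
    ∃ a b : κ → F, ∃ Y ⊆ X, 2 / ε - 1 ≤ #Y ∧ ∀ x ∈ Y, ℓ x = b + x • a := by
  have hcube : (((σ / #S : ℝ) + ε) ^ ((1 : ℝ) / 3)) ^ 3 * #S = σ + ε * #S := by
    rw [← Real.rpow_natCast, ← Real.rpow_mul (by positivity)]
    norm_num
    field_simp
  have hεX : 2 / ε ≤ ε * #X := calc
    2 / ε = ε * (2 / ε ^ 2) := by field_simp
    _ ≤ ε * #X := by gcongr
  have h2ε : 2 < 2 / ε := by rw [lt_div_iff₀ hε]; linarith
  obtain ⟨x₁, -, x₂, -, hne, hY⟩ := exists_pair_many_large_triple_inter X S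
    (fun x => consistentSet S B x (ℓ x)) (fun x => filter_subset _ S) hS (by positivity) hcube
    (by linarith) hℓ
  obtain ⟨a, b, hab⟩ := exists_eq_add_smul_of_robust hrobust hB (ℓ := ℓ) hne (Y := X.filter _)
    fun x hx => (mem_filter.1 hx).2
  exact ⟨a, b, _, filter_subset _ X, by linarith, hab⟩

end Field

section Decoding

variable {F : Type*} [Field F] {ι : Type*} [Fintype ι]

theorem card_disagree_mul_le [Nonempty ι] {u ustar a b : ι → F} {Y : Finset F} {δ : ℝ}
    (hclose : ∀ x ∈ Y, relDist (ustar + x • u) (b + x • a) < δ) :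
    (#(univ.filter fun j => ¬(u j = a j ∧ ustar j = b j)) : ℝ) * (#Y - 1) ≤
      #Y * (δ * Fintype.card ι) := by
  set D := univ.filter fun j => ¬(u j = a j ∧ ustar j = b j)
  set r : ι → F → Prop := fun j x => (ustar + x • u) j ≠ (b + x • a) j
  have hcol : ∀ j ∈ D, (#Y : ℝ) - 1 ≤ #(Y.filter (r j)) := by
    intro j hj
    have hagree : #(Y.filter fun x => ¬r j x) ≤ 1 := by
      simpa [r] using card_filter_add_mul_eq_add_mul_le_one (mem_filter.1 hj).2 Y
    have hsplit := card_filter_add_card_filter_not (s := Y) (r j)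
    have : (#Y : ℝ) ≤ #(Y.filter (r j)) + 1 := by exact_mod_cast (by omega : #Y ≤ _ + 1)
    linarith
  have hrow : ∀ x ∈ Y, (#(D.filter (r · x)) : ℝ) ≤ δ * Fintype.card ι := by
    intro x hx
    have hdist := hclose x hx
    rw [relDist, div_lt_iff₀ (by exact_mod_cast Fintype.card_pos)] at hdist
    refine le_trans ?_ hdist.le
    exact_mod_cast card_le_card (filter_subset_filter _ (subset_univ D))
  simpa only [nsmul_eq_mul] using card_nsmul_le_card_nsmul (R := ℝ) r hcol hrow

theorem le_card_agree_of_relDist_lt {u ustar a b : ι → F} {Y : Finset F} {δ ε : ℝ}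
    (hδ : 0 ≤ δ) (hε : 0 < ε) (hδε : δ + ε < 1) (hY : 2 / ε - 1 ≤ #Y)
    (hclose : ∀ x ∈ Y, relDist (ustar + x • u) (b + x • a) < δ) :
    (1 - δ - ε) * Fintype.card ι ≤ #(univ.filter fun j => u j = a j ∧ ustar j = b j) := by
  cases isEmpty_or_nonempty ι
  · simp
  have hcount := card_disagree_mul_le hclose
  have hsplit : (#(univ.filter fun j => u j = a j ∧ ustar j = b j) : ℝ) +
      #(univ.filter fun j => ¬(u j = a j ∧ ustar j = b j)) = Fintype.card ι := by
    rw [← Nat.cast_add, card_filter_add_card_filter_not, card_univ]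
  have hεY : 2 - ε ≤ ε * #Y := by
    have h2 : ε * (2 / ε - 1) = 2 - ε := by field_simp
    nlinarith [mul_le_mul_of_nonneg_left hY hε.le]
  have hY₁ : (0 : ℝ) < #Y - 1 := pos_of_mul_pos_right (by linarith : 0 < ε * (#Y - 1)) hε.le
  have hD : (#(univ.filter fun j => ¬(u j = a j ∧ ustar j = b j)) : ℝ) ≤
      (δ + ε) * Fintype.card ι := by
    refine le_of_mul_le_mul_right ?_ hY₁
    nlinarith [(Nat.cast_nonneg (Fintype.card ι) : (0 : ℝ) ≤ _)]
  linarith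

end Decoding

section Proximity

variable {F : Type*} [Field F] [Fintype F] {κ ι : Type*} [Fintype κ] [Fintype ι]

noncomputable def nearMessages (G : Matrix κ ι F) (δ : ℝ) (w : ι → F) : Finset (κ → F) :=
  univ.filter fun ℓ => relDist w (ℓ ᵥ* G) < δ

theorem mem_nearMessages {G : Matrix κ ι F} {δ : ℝ} {w : ι → F} {ℓ : κ → F} :
    ℓ ∈ nearMessages G δ w ↔ relDist w (ℓ ᵥ* G) < δ := by
  simp [nearMessages]

noncomputable def goodPoints (G : Matrix κ ι F) (S : Finset (κ → F)) (B : (κ → F) → F[X])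
    (δ : ℝ) (u ustar : ι → F) (x : F) : Finset (κ → F) :=
  (nearMessages G δ (ustar + x • u)).biUnion (consistentSet S B x)

theorem mem_goodPoints {G : Matrix κ ι F} {S : Finset (κ → F)} {B : (κ → F) → F[X]} {δ : ℝ}
    {u ustar : ι → F} {x : F} {z : κ → F} :
    z ∈ goodPoints G S B δ u ustar x ↔
      z ∈ S ∧ ∃ ℓ : κ → F, ℓ ⬝ᵥ z = (B z).eval x ∧ relDist (ustar + x • u) (ℓ ᵥ* G) < δ := by
  simp only [goodPoints, consistentSet, mem_biUnion, mem_nearMessages, mem_filter]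
  aesop

theorem ncard_eq_sum_card_goodPoints (G : Matrix κ ι F) (S : Finset (κ → F))
    (B : (κ → F) → F[X]) (δ : ℝ) (u ustar : ι → F) :
    ({p : F × ↥S | ∃ ℓ : κ → F, (∑ i, ℓ i * (p.2 : κ → F) i) = (B (p.2 : κ → F)).eval p.1 ∧
        relDist (fun j => ustar j + p.1 * u j) (ℓ ᵥ* G) < δ}).ncard =
      ∑ x, #(goodPoints G S B δ u ustar x) := by
  rw [Set.ncard_eq_toFinset_card', Set.toFinset_ofPred, card_filter, Fintype.sum_prod_type]
  refine sum_congr rfl fun x _ => ?_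
  rw [← card_filter]
  refine card_nbij (fun z => z.1) (fun z hz => ?_) (fun z _ z' _ h => Subtype.val_injective h)
    (fun z hz => ?_)
  · exact mem_goodPoints.2 ⟨z.2, (mem_filter.1 hz).2⟩
  · obtain ⟨hzS, hz⟩ := mem_goodPoints.1 (mem_coe.1 hz)
    exact ⟨⟨z, hzS⟩, mem_filter.2 ⟨mem_univ _, hz⟩, rfl⟩

theorem exists_large_set_of_heavy_points {G : Matrix κ ι F} {S : Finset (κ → F)}
    {B : (κ → F) → F[X]} {δ : ℝ} {u ustar : ι → F} {L c ε : ℝ}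
    (hnear : ∀ w, (#(nearMessages G δ w) : ℝ) ≤ L) (hc : 0 < c) (hε : 0 < ε)
    (h₁ : 2 * L * c ≤ (∑ x, (#(goodPoints G S B δ u ustar x) : ℝ)) / (Fintype.card F * #S))
    (h₂ : 4 / (ε ^ 2 * Fintype.card F) ≤
      (∑ x, (#(goodPoints G S B δ u ustar x) : ℝ)) / (Fintype.card F * #S)) :
    ∃ X : Finset F, 2 / ε ^ 2 ≤ #X ∧
      ∀ x ∈ X, ∃ ℓ ∈ nearMessages G δ (ustar + x • u), c * #S ≤ #(consistentSet S B x ℓ) := by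
  obtain ⟨x₀, z₀, hz₀⟩ : ∃ x₀ z₀, z₀ ∈ goodPoints G S B δ u ustar x₀ := by
    by_contra! hempty
    have hzero : ∑ x, (#(goodPoints G S B δ u ustar x) : ℝ) = 0 :=
      sum_eq_zero fun x _ => by simp [eq_empty_of_forall_notMem (hempty x)]
    rw [hzero, zero_div] at h₂
    exact (not_le.2 (by positivity)) h₂
  obtain ⟨hz₀S, ℓ₀, -, hℓ₀⟩ := mem_goodPoints.1 hz₀
  have hL : 1 ≤ L := (hnear (ustar + x₀ • u)).trans' (by
    exact_mod_cast card_pos.2 ⟨ℓ₀, mem_nearMessages.2 hℓ₀⟩)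
  have hS : (0 : ℝ) < #S := by exact_mod_cast card_pos.2 ⟨z₀, hz₀S⟩
  refine ⟨_, two_div_sq_le_card_filter (fun x => #(goodPoints G S B δ u ustar x)) (t := L * c)
    (fun x => card_le_card (biUnion_subset.2 fun ℓ _ => filter_subset _ S)) (by positivity) hε
    (by linarith) h₂, fun x hx => ?_⟩
  have hx : L * c * #S ≤ #(goodPoints G S B δ u ustar x) := (mem_filter.1 hx).2
  refine exists_le_card_of_subset_biUnion (A := goodPoints G S B δ u ustar x) (fun _ h => h)
    (card_pos.1 (Nat.cast_pos.1 ((by positivity : (0 : ℝ) < L * c * #S).trans_le hx))) ?_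
  nlinarith [mul_le_mul_of_nonneg_right (hnear (ustar + x • u)) (by positivity : 0 ≤ c * #S)]

end Proximity

theorem stmt11_general {F : Type*} [Field F] [Fintype F] {n k : ℕ}
    (G : Matrix (Fin k) (Fin n) F)
    (δ ε L : ℝ) (hε : 0 < ε)
    (hLD : ∀ w : Fin n → F,
      (({ℓ : Fin k → F | relDist w (Matrix.vecMul ℓ G) < δ}).ncard : ℝ) ≤ L)
    (σ N : ℕ) (S : Finset (Fin k → F)) (hN : S.card = N)
    (hrobust : ∀ T : Finset (Fin k → F), T ⊆ S → T.card = σ →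
      Submodule.span F (T : Set (Fin k → F)) = ⊤)
    (u ustar : Fin n → F) (B : (Fin k → F) → Polynomial F) (hB : ∀ z, (B z).degree ≤ 1)
    (hpr : max (2 * L * ((σ / N : ℝ) + ε) ^ ((1:ℝ)/3)) (4 / (ε ^ 2 * Fintype.card F))
      ≤ (({p : F × ↥S | ∃ ℓ : Fin k → F,
            (∑ i, ℓ i * (p.2 : Fin k → F) i) = (B (p.2 : Fin k → F)).eval p.1 ∧
            relDist (fun j => ustar j + p.1 * u j) (Matrix.vecMul ℓ G) < δ}).ncard : ℝ)
          / ((Fintype.card F : ℝ) * N)) :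
    ∃ ℓ ℓstar : Fin k → F, ∃ C : Finset (Fin n),
      ((1 - δ - ε) * n ≤ (C.card : ℝ)) ∧
      (∀ j ∈ C, u j = Matrix.vecMul ℓ G j) ∧
      (∀ j ∈ C, ustar j = Matrix.vecMul ℓstar G j) := by
  by_cases htriv : (1 - δ - ε) * n ≤ 0
  · exact ⟨0, 0, ∅, by simpa using htriv, by simp, by simp⟩
  have hδε : δ + ε < 1 := by
    by_contra! h
    exact htriv (mul_nonpos_of_nonpos_of_nonneg (by linarith) (Nat.cast_nonneg n))
  subst hN
  rw [ncard_eq_sum_card_goodPoints, max_le_iff] at hpr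
  push_cast at hpr
  have hS : S.Nonempty := by
    by_contra! hS
    simp only [hS, card_empty, CharP.cast_eq_zero, mul_zero, div_zero] at hpr
    exact (not_le.2 (by positivity)) hpr.2
  obtain ⟨X, hX, hheavy⟩ := exists_large_set_of_heavy_points
    (fun w => by simpa [nearMessages, ← Set.ncard_coe_finset] using hLD w) (by positivity) hε
    hpr.1 hpr.2
  choose! ℓ hℓnear hℓcons using hheavy
  obtain ⟨x, hx⟩ := card_pos.1 (Nat.cast_pos.1 ((by positivity : (0 : ℝ) < 2 / ε ^ 2).trans_le hX))
  have hδ : 0 ≤ δ := (relDist_nonneg _ _).trans (mem_nearMessages.1 (hℓnear x hx)).le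
  obtain ⟨a, b, Y, hYX, hY, hab⟩ :=
    exists_affine_on_large_subset hS hrobust hB hε (by linarith) hX hℓcons
  have hagree := le_card_agree_of_relDist_lt (u := u) (ustar := ustar) (a := a ᵥ* G)
    (b := b ᵥ* G) hδ hε hδε hY fun x hx => by
      rw [← smul_vecMul, ← add_vecMul, ← hab x hx]
      exact mem_nearMessages.1 (hℓnear x (hYX hx))
  refine ⟨a, b, univ.filter fun j => u j = (a ᵥ* G) j ∧ ustar j = (b ᵥ* G) j,
    by simpa only [Fintype.card_fin] using hagree,
    fun j hj => (mem_filter.1 hj).2.1, fun j hj => (mem_filter.1 hj).2.2⟩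

theorem stmt11 {F : Type*} [Field F] [Fintype F] {n k d : ℕ}
    (G : Matrix (Fin k) (Fin n) F)
    (hinj : Function.Injective (fun ℓ : Fin k → F => Matrix.vecMul ℓ G))
    (hdist : ∀ ℓ : Fin k → F, ℓ ≠ 0 →
      d ≤ (Finset.univ.filter (fun j => Matrix.vecMul ℓ G j ≠ 0)).card)
    (δ ε L : ℝ) (hε : 0 < ε) (hε3 : ε < 1/3)
    (hLD : ∀ w : Fin n → F,
      (({ℓ : Fin k → F | relDist w (Matrix.vecMul ℓ G) < δ}).ncard : ℝ) ≤ L)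
    (σ N : ℕ) (S : Finset (Fin k → F)) (hN : S.card = N)
    (hrobust : ∀ T : Finset (Fin k → F), T ⊆ S → T.card = σ →
      Submodule.span F (T : Set (Fin k → F)) = ⊤)
    (u ustar : Fin n → F) (B : (Fin k → F) → Polynomial F) (hB : ∀ z, (B z).degree ≤ 1)
    (hpr : max (2 * L * ((σ / N : ℝ) + ε) ^ ((1:ℝ)/3)) (4 / (ε ^ 2 * Fintype.card F))
      ≤ (({p : F × ↥S | ∃ ℓ : Fin k → F,
            (∑ i, ℓ i * (p.2 : Fin k → F) i) = (B (p.2 : Fin k → F)).eval p.1 ∧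
            relDist (fun j => ustar j + p.1 * u j) (Matrix.vecMul ℓ G) < δ}).ncard : ℝ)
          / ((Fintype.card F : ℝ) * N)) :
    ∃ ℓ ℓstar : Fin k → F, ∃ C : Finset (Fin n),
      ((1 - δ - ε) * n ≤ (C.card : ℝ)) ∧
      (∀ j ∈ C, u j = Matrix.vecMul ℓ G j) ∧
      (∀ j ∈ C, ustar j = Matrix.vecMul ℓstar G j) :=
  stmt11_general G δ ε L hε hLD σ N S hN hrobust u ustar B hB hpr
end

section
/- Let f(X) ∈ F[X] with deg(f) < ρ·N, and let q(X) ∈ F[X] be a degree-2 polynomial. Write f(X) = Σ_{j=0}^{t} a_j(X)·q(X)^j with deg(a_j) ≤ 1 for all j, where t ≤ ρN/2. Then for any s ∈ F and any root x₀ of q(X) - s, the unique degree ≤ 1 polynomial P_{f,s}(X) satisfying P_{f,s}(x₀) = f(x₀) for both roots x₀ of q(X)-s is P_{f,s}(X) = Σ_{j=0}^t a_j(X)·s^j, and for any fixed x ∈ F, the map s ↦ P_{f,s}(x) = Σ_j a_j(x)·s^j is a polynomial in s of degree ≤ t. -/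
open Finset Polynomial

theorem stmt13 {F : Type*} [Field F] (ρ : ℝ) (N : ℕ) (f q : Polynomial F)
    (hf : (f.natDegree : ℝ) < ρ * N) (hq : q.degree = 2)
    (t : ℕ) (a : ℕ → Polynomial F) (ha : ∀ j, (a j).degree ≤ 1)
    (hdecomp : f = ∑ j ∈ Finset.range (t + 1), a j * q ^ j)
    (ht : (t : ℝ) ≤ ρ * N / 2)
    (s : F) (x₀ x₁ : F) (hx : x₀ ≠ x₁)
    (hr0 : q.eval x₀ = s) (hr1 : q.eval x₁ = s) :
    ((∑ j ∈ Finset.range (t + 1), a j * Polynomial.C (s ^ j)).degree ≤ 1 ∧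
     (∑ j ∈ Finset.range (t + 1), a j * Polynomial.C (s ^ j)).eval x₀ = f.eval x₀ ∧
     (∑ j ∈ Finset.range (t + 1), a j * Polynomial.C (s ^ j)).eval x₁ = f.eval x₁ ∧
     (∀ P' : Polynomial F, P'.degree ≤ 1 → P'.eval x₀ = f.eval x₀ → P'.eval x₁ = f.eval x₁ →
        P' = ∑ j ∈ Finset.range (t + 1), a j * Polynomial.C (s ^ j))) ∧
    (∀ x : F, ∃ p : Polynomial F, p.degree ≤ (t : ℕ) ∧
      ∀ s' : F, p.eval s' = ∑ j ∈ Finset.range (t + 1), (a j).eval x * s' ^ j) := by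
  classical
  set P : Polynomial F := ∑ j ∈ Finset.range (t + 1), a j * Polynomial.C (s ^ j) with hP
  have hdeg : P.degree ≤ 1 := by
    refine le_trans (Polynomial.degree_sum_le _ _) (Finset.sup_le ?_)
    intro j _
    calc (a j * Polynomial.C (s ^ j)).degree ≤ (a j).degree + (Polynomial.C (s ^ j)).degree :=
          Polynomial.degree_mul_le _ _
      _ ≤ 1 + 0 := add_le_add (ha j) Polynomial.degree_C_le
      _ = 1 := by simp
  have heval : ∀ y : F, q.eval y = s → P.eval y = f.eval y := by
    intro y hy
    simp [hP, hdecomp, Polynomial.eval_finset_sum, hy]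
  have h0 := heval x₀ hr0
  have h1 := heval x₁ hr1
  refine ⟨⟨hdeg, h0, h1, ?_⟩, ?_⟩
  · intro P' hP'deg hP'0 hP'1
    by_contra hne
    have hsub : P' - P ≠ 0 := sub_ne_zero.mpr hne
    have hd : (P' - P).degree ≤ 1 := le_trans (Polynomial.degree_sub_le _ _) (by
      simp [hP'deg, hdeg])
    have hcard : ({x₀, x₁} : Finset F).card ≤ (P' - P).roots.toFinset.card := by
      apply Finset.card_le_card
      intro y hy
      simp only [Finset.mem_insert, Finset.mem_singleton] at hy
      rcases hy with rfl | rfl <;>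
        simp_all [Multiset.mem_toFinset, Polynomial.mem_roots, hsub,
          Polynomial.IsRoot, sub_eq_zero]
    have hcard2 : ({x₀, x₁} : Finset F).card = 2 := by
      simp [Finset.card_insert_of_notMem, hx]
    have hroots : ((P' - P).roots.toFinset.card : ℕ) ≤ (P' - P).roots.card :=
      Multiset.toFinset_card_le _
    have hle : (P' - P).roots.card ≤ (P' - P).natDegree :=
      (P' - P).card_roots' 
    have hnd : (P' - P).natDegree ≤ 1 := Polynomial.natDegree_le_iff_degree_le.mpr hd
    omega
  · intro x
    refine ⟨∑ j ∈ Finset.range (t + 1), Polynomial.C ((a j).eval x) * Polynomial.X ^ j, ?_, ?_⟩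
    · refine le_trans (Polynomial.degree_sum_le _ _) (Finset.sup_le ?_)
      intro j hj
      calc (Polynomial.C ((a j).eval x) * Polynomial.X ^ j).degree
          ≤ (Polynomial.C ((a j).eval x)).degree + (Polynomial.X ^ j : Polynomial F).degree :=
            Polynomial.degree_mul_le _ _
        _ ≤ 0 + j := by
            refine add_le_add Polynomial.degree_C_le ?_
            simpa using Polynomial.degree_X_pow_le (R := F) j
        _ ≤ (t : WithBot ℕ) := by
            simp only [zero_add]
            exact_mod_cast Nat.cast_le.mpr (Nat.lt_succ_iff.mp (Finset.mem_range.mp hj))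
    · intro s'
      simp [Polynomial.eval_finset_sum]
end

section
/- Let Q_1, ..., Q_m ∈ F_q[X] be nonzero polynomials with least common multiple Q_lcm, and let P_1, ..., P_m ∈ F_q[X]. Suppose that for every α = (α_1,...,α_m) ∈ F_q^m, the polynomial Σ_i α_i · P_i(X) · (Q_lcm(X)/Q_i(X)) is divisible by Q_lcm(X). Then for each i and each root x of Q_i in F_q, P_i(x) = 0. -/
open Finset Polynomial

theorem stmt17 {F : Type*} [Field F] (m : ℕ) (Q P : Fin m → Polynomial F)
    (hQ : ∀ i, Q i ≠ 0) (Qlcm : Polynomial F) (hQlcm : Qlcm ≠ 0)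
    (hdvd : ∀ i, Q i ∣ Qlcm)
    (hleast : ∀ R : Polynomial F, (∀ i, Q i ∣ R) → Qlcm ∣ R)
    (h : ∀ α : Fin m → F, Qlcm ∣ ∑ i, Polynomial.C (α i) * P i * (Qlcm / Q i)) :
    ∀ i, ∀ x : F, (Q i).eval x = 0 → (P i).eval x = 0 := by
  intro i x hx
  have hα := h (fun j => if j = i then 1 else 0)
  have hsum : (∑ j, Polynomial.C (if j = i then (1:F) else 0) * P j * (Qlcm / Q j))
      = P i * (Qlcm / Q i) := by
    rw [Finset.sum_eq_single i]
    · simp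
    · intro b _ hb; simp [hb]
    · simp
  rw [hsum] at hα
  have hfac : Qlcm = Q i * (Qlcm / Q i) :=
    (EuclideanDomain.mul_div_cancel' (hQ i) (hdvd i)).symm
  have hne : Qlcm / Q i ≠ 0 := by
    intro h0
    rw [h0, mul_zero] at hfac
    exact hQlcm hfac
  have hdvdP : Q i ∣ P i := by
    have : Q i * (Qlcm / Q i) ∣ P i * (Qlcm / Q i) := hfac ▸ hα
    exact (mul_dvd_mul_iff_right hne).mp this
  obtain ⟨c, hc⟩ := hdvdP
  rw [hc, Polynomial.eval_mul, hx, zero_mul]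
end
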